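/- arXiv:2212.02206 — 3 statements merged into one kernel-verified Lean document; each statement's English description precedes it below -/
import Mathlib

section
/- Let A ∈ SL(3,ℍ) be an upper triangular matrix all of whose diagonal entries are real numbers. Then A is simple, i.e., A is conjugate in SL(3,ℍ) to a matrix with all real entries. -/
noncomputable section

open Matrix Polynomial
open scoped Quaternion

abbrev M3H := Matrix (Fin 3) (Fin 3) (Quaternion ℝ)
abbrev M6C := Matrix (Fin 3 ⊕ Fin 3) (Fin 3 ⊕ Fin 3) ℂ

/-- First complex component: for `q = z + w·j`, this is `z`. -/
def q1 : Quaternion ℝ →+ ℂ where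
  toFun q := ⟨q.re, q.imI⟩
  map_zero' := by apply Complex.ext <;> simp
  map_add' p q := by apply Complex.ext <;> simp

/-- Second complex component: for `q = z + w·j`, this is `w`. -/
def q2 : Quaternion ℝ →+ ℂ where
  toFun q := ⟨q.imJ, q.imK⟩
  map_zero' := by apply Complex.ext <;> simp
  map_add' p q := by apply Complex.ext <;> simp

@[simp] lemma q1_apply (q : Quaternion ℝ) : q1 q = ⟨q.re, q.imI⟩ := rfl
@[simp] lemma q2_apply (q : Quaternion ℝ) : q2 q = ⟨q.imJ, q.imK⟩ := rfl

lemma q1_mul (p q : Quaternion ℝ) :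
    q1 (p * q) = q1 p * q1 q - q2 p * star (q2 q) := by
  apply Complex.ext <;>
    simp [Complex.ext_iff, Complex.mul_re, Complex.mul_im, Quaternion.re_mul,
      Quaternion.imI_mul, Quaternion.imJ_mul, Quaternion.imK_mul] <;> ring

lemma q2_mul (p q : Quaternion ℝ) :
    q2 (p * q) = q1 p * q2 q + q2 p * star (q1 q) := by
  apply Complex.ext <;>
    simp [Complex.ext_iff, Complex.mul_re, Complex.mul_im, Quaternion.re_mul,
      Quaternion.imI_mul, Quaternion.imJ_mul, Quaternion.imK_mul] <;> ring

lemma q1_one : q1 1 = 1 := by apply Complex.ext <;> simp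
lemma q2_one : q2 (1 : Quaternion ℝ) = 0 := by apply Complex.ext <;> simp

lemma sq1_mul (p q : Quaternion ℝ) :
    star (q1 (p * q)) = star (q1 p) * star (q1 q) - star (q2 p) * q2 q := by
  rw [q1_mul, star_sub, star_mul', star_mul', star_star]

lemma sq2_mul (p q : Quaternion ℝ) :
    star (q2 (p * q)) = star (q1 p) * star (q2 q) + star (q2 p) * q1 q := by
  rw [q2_mul, star_add, star_mul', star_mul', star_star]

/-- The complex adjoint `Φ(A)` of a quaternionic matrix `A = A₁ + A₂·j`:
the block matrix `[[A₁, A₂], [-conj A₂, conj A₁]]`. -/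
def Phi (A : M3H) : M6C :=
  fromBlocks (A.map q1) (A.map q2)
    (-(A.map fun x => star (q2 x))) (A.map fun x => star (q1 x))

lemma Phi_mul (A B : M3H) : Phi (A * B) = Phi A * Phi B := by
  rw [Phi, Phi, Phi, Matrix.fromBlocks_multiply]
  have h11 : (A * B).map q1
      = A.map q1 * B.map q1 + A.map q2 * (-(B.map fun x => star (q2 x))) := by
    ext i j
    simp only [Matrix.map_apply, Matrix.mul_apply, Matrix.add_apply, Matrix.neg_apply]
    rw [map_sum, ← Finset.sum_add_distrib]
    refine Finset.sum_congr rfl fun k _ => ?_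
    rw [q1_mul]; ring
  have h12 : (A * B).map q2
      = A.map q1 * B.map q2 + A.map q2 * (B.map fun x => star (q1 x)) := by
    ext i j
    simp only [Matrix.map_apply, Matrix.mul_apply, Matrix.add_apply]
    rw [map_sum, ← Finset.sum_add_distrib]
    refine Finset.sum_congr rfl fun k _ => ?_
    rw [q2_mul]
  have h21 : (-(A * B).map fun x => star (q2 x))
      = (-(A.map fun x => star (q2 x))) * B.map q1
        + (A.map fun x => star (q1 x)) * (-(B.map fun x => star (q2 x))) := by
    ext i j
    simp only [Matrix.map_apply, Matrix.mul_apply, Matrix.add_apply, Matrix.neg_apply]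
    rw [map_sum, star_sum, ← Finset.sum_add_distrib, ← Finset.sum_neg_distrib]
    refine Finset.sum_congr rfl fun k _ => ?_
    rw [sq2_mul]; ring
  have h22 : ((A * B).map fun x => star (q1 x))
      = (-(A.map fun x => star (q2 x))) * B.map q2
        + (A.map fun x => star (q1 x)) * (B.map fun x => star (q1 x)) := by
    ext i j
    simp only [Matrix.map_apply, Matrix.mul_apply, Matrix.add_apply, Matrix.neg_apply]
    rw [map_sum, star_sum, ← Finset.sum_add_distrib]
    refine Finset.sum_congr rfl fun k _ => ?_
    rw [sq1_mul]; ring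
  rw [h11, h12, h21, h22]

lemma Phi_one : Phi (1 : M3H) = 1 := by
  have h1 : (1 : M3H).map q1 = 1 := by
    ext i j
    by_cases h : i = j <;> simp [Matrix.map_apply, Matrix.one_apply, h, Complex.ext_iff]
  have h2 : (1 : M3H).map q2 = 0 := by
    ext i j
    by_cases h : i = j <;> simp [Matrix.map_apply, Matrix.one_apply, h, Complex.ext_iff]
  have h3 : ((1 : M3H).map fun x => star (q2 x)) = 0 := by
    ext i j
    by_cases h : i = j <;> simp [Matrix.map_apply, Matrix.one_apply, h, Complex.ext_iff]
  have h4 : ((1 : M3H).map fun x => star (q1 x)) = 1 := by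
    ext i j
    by_cases h : i = j <;> simp [Matrix.map_apply, Matrix.one_apply, h, Complex.ext_iff]
  rw [Phi, h1, h2, h3, h4, neg_zero, Matrix.fromBlocks_one]

lemma Phi_zero : Phi (0 : M3H) = 0 := by
  have h1 : (0 : M3H).map q1 = 0 := by ext i j; simp [Complex.ext_iff]
  have h2 : (0 : M3H).map q2 = 0 := by ext i j; simp [Complex.ext_iff]
  have h3 : ((0 : M3H).map fun x => star (q2 x)) = 0 := by ext i j; simp [Complex.ext_iff]
  have h4 : ((0 : M3H).map fun x => star (q1 x)) = 0 := by ext i j; simp [Complex.ext_iff]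
  rw [Phi, h1, h2, h3, h4, neg_zero, Matrix.fromBlocks_zero]

lemma Phi_add (A B : M3H) : Phi (A + B) = Phi A + Phi B := by
  have h1 : (A + B).map q1 = A.map q1 + B.map q1 := by ext i j; simp [Complex.ext_iff]
  have h2 : (A + B).map q2 = A.map q2 + B.map q2 := by ext i j; simp [Complex.ext_iff]
  have h3 : ((A + B).map fun x => star (q2 x))
      = (A.map fun x => star (q2 x)) + (B.map fun x => star (q2 x)) := by
    ext i j; simp [Complex.ext_iff]; ring
  have h4 : ((A + B).map fun x => star (q1 x))
      = (A.map fun x => star (q1 x)) + (B.map fun x => star (q1 x)) := by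
    ext i j; simp [Complex.ext_iff]; ring
  rw [Phi, Phi, Phi, h1, h2, h3, h4, neg_add, Matrix.fromBlocks_add]

/-- `Φ` as a ring homomorphism `M(3,ℍ) →+* M(6,ℂ)`. -/
def PhiHom : M3H →+* M6C where
  toFun := Phi
  map_one' := Phi_one
  map_mul' := Phi_mul
  map_zero' := Phi_zero
  map_add' := Phi_add

/-- The quaternionic determinant `det_ℍ(A) := det (Φ A)`. -/
def detH (A : M3H) : ℂ := (Phi A).det

/-- `SL(3,ℍ)`: the invertible quaternionic `3×3` matrices with `det_ℍ = 1`,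
as a subgroup of the unit group of the matrix ring. -/
def SL3H : Subgroup (M3H)ˣ :=
  MonoidHom.ker (Matrix.detMonoidHom.comp (PhiHom.toMonoidHom.comp (Units.coeHom M3H)))

@[simp] lemma PhiHom_apply (A : M3H) : PhiHom A = Phi A := rfl

lemma mem_SL3H {A : (M3H)ˣ} : A ∈ SL3H ↔ detH A.val = 1 := by
  simp [SL3H, MonoidHom.mem_ker, detH]

/-- The underlying quaternionic matrix of an element of `SL(3,ℍ)`. -/
def mat (A : SL3H) : M3H := A.val.val

/-- A quaternionic matrix is real if each entry lies in `ℝ ⊂ ℍ`. -/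
def IsRealMatrix (B : M3H) : Prop := ∀ i j, ∃ r : ℝ, B i j = (r : Quaternion ℝ)

/-- A *simple* element of `SL(3,ℍ)`: an element conjugate in `SL(3,ℍ)` to a matrix
with all entries real. -/
def IsSimple (g : SL3H) : Prop := ∃ h : SL3H, IsRealMatrix (mat (h * g * h⁻¹))

/-! ### Auxiliary infrastructure -/

section Aux

local notation "ℍ'" => Quaternion ℝ

/-- Strictly upper triangular matrix with entries `u v w`. -/
def EM (u v w : ℍ') : M3H := !![0,u,v; 0,0,w; 0,0,0]

lemma EM_sq (u v w : ℍ') : EM u v w * EM u v w = !![0,0,u*w; 0,0,0; 0,0,0] := by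
  refine Matrix.ext fun i j => ?_
  fin_cases i <;> fin_cases j <;>
    simp [EM, Matrix.mul_apply, Fin.sum_univ_succ, Matrix.vecHead, Matrix.vecTail]

lemma EM_cube (u v w : ℍ') : EM u v w * EM u v w * EM u v w = 0 := by
  rw [EM_sq]
  refine Matrix.ext fun i j => ?_
  fin_cases i <;> fin_cases j <;>
    simp [EM, Matrix.mul_apply, Fin.sum_univ_succ, Matrix.vecHead, Matrix.vecTail]

lemma upt_mul_inv (u v w : ℍ') :
    (1 + EM u v w) * (1 - EM u v w + EM u v w * EM u v w) = 1 := by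
  have h := EM_cube u v w
  have e : (1 + EM u v w) * (1 - EM u v w + EM u v w * EM u v w)
      = 1 + EM u v w * EM u v w * EM u v w := by noncomm_ring
  rw [e, h, add_zero]

lemma upt_inv_mul (u v w : ℍ') :
    (1 - EM u v w + EM u v w * EM u v w) * (1 + EM u v w) = 1 := by
  have h := EM_cube u v w
  have e : (1 - EM u v w + EM u v w * EM u v w) * (1 + EM u v w)
      = 1 + EM u v w * EM u v w * EM u v w := by noncomm_ring
  rw [e, h, add_zero]

/-- Unipotent upper triangular unit. -/
def uptU (u v w : ℍ') : (M3H)ˣ :=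
  ⟨1 + EM u v w, 1 - EM u v w + EM u v w * EM u v w, upt_mul_inv u v w, upt_inv_mul u v w⟩

/-- Reindexing `Fin 6 ≃ Fin 3 ⊕ Fin 3` interleaving the two copies. -/
def e6 : Fin 6 ≃ (Fin 3 ⊕ Fin 3) where
  toFun := ![Sum.inl 0, Sum.inr 0, Sum.inl 1, Sum.inr 1, Sum.inl 2, Sum.inr 2]
  invFun := Sum.elim ![0,2,4] ![1,3,5]
  left_inv := by decide
  right_inv := by decide

@[simp] lemma e6_0 : e6 0 = Sum.inl 0 := rfl
@[simp] lemma e6_1 : e6 1 = Sum.inr 0 := rfl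
@[simp] lemma e6_2 : e6 2 = Sum.inl 1 := rfl
@[simp] lemma e6_3 : e6 3 = Sum.inr 1 := rfl
@[simp] lemma e6_4 : e6 4 = Sum.inl 2 := rfl
@[simp] lemma e6_5 : e6 5 = Sum.inr 2 := rfl

set_option maxRecDepth 10000 in
lemma detH_triangular (M : M3H) (h10 : M 1 0 = 0) (h20 : M 2 0 = 0) (h21 : M 2 1 = 0)
    (hd0 : M 0 0 = 1) (hd1 : M 1 1 = 1) (hd2 : M 2 2 = 1) : detH M = 1 := by
  have key : detH M = ((Phi M).submatrix e6 e6).det := by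
    rw [Matrix.det_submatrix_equiv_self]; rfl
  rw [key, Matrix.det_of_upperTriangular]
  · rw [Fin.prod_univ_six]
    simp [Phi, Matrix.fromBlocks, hd0, hd1, hd2]
    norm_num [Complex.ext_iff]
  · intro i j hij
    fin_cases i <;> fin_cases j <;>
      first
        | exact absurd hij (by decide)
        | simp [Phi, Matrix.fromBlocks, Matrix.submatrix_apply,
            h10, h20, h21, hd0, hd1, hd2, q1_one, q2_one, Complex.ext_iff]

lemma detH_unipotent (u v w : ℍ') : detH (1 + EM u v w) = 1 := by
  refine detH_triangular _ ?_ ?_ ?_ ?_ ?_ ?_ <;>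
    simp [EM, Matrix.vecHead, Matrix.vecTail, Matrix.one_apply, Function.comp]

/-- Reindexing `Fin 2 × Fin 3 ≃ Fin 3 ⊕ Fin 3`. -/
def e23 : (Fin 2 × Fin 3) ≃ (Fin 3 ⊕ Fin 3) where
  toFun x := ![Sum.inl, Sum.inr] x.1 x.2
  invFun := Sum.elim (fun i => (0, i)) (fun i => (1, i))
  left_inv := by decide
  right_inv := by decide

lemma phi_diagonal (d : Fin 3 → Quaternion ℝ) :
    (Phi (Matrix.diagonal d)).submatrix e23 e23 =
      Matrix.blockDiagonal
        (fun i => !![q1 (d i), q2 (d i); -star (q2 (d i)), star (q1 (d i))]) := by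
  refine Matrix.ext fun x y => ?_
  rcases x with ⟨a, i⟩
  rcases y with ⟨b, j⟩
  fin_cases a <;> fin_cases b <;>
    · by_cases hij : i = j
      · subst hij
        simp [e23, Phi, Matrix.fromBlocks, Matrix.blockDiagonal_apply, Matrix.diagonal_apply]
      · simp [e23, Phi, Matrix.fromBlocks, Matrix.blockDiagonal_apply,
          Matrix.diagonal_apply, hij, Complex.ext_iff]

lemma detH_diagonal (d : Fin 3 → Quaternion ℝ) :
    detH (Matrix.diagonal d) = ∏ i, ((Quaternion.normSq (d i) : ℝ) : ℂ) := by
  have key : detH (Matrix.diagonal d) = ((Phi (Matrix.diagonal d)).submatrix e23 e23).det := by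
    rw [Matrix.det_submatrix_equiv_self]; rfl
  rw [key, phi_diagonal, Matrix.det_blockDiagonal]
  refine Finset.prod_congr rfl fun i _ => ?_
  rw [Matrix.det_fin_two_of]
  apply Complex.ext <;>
    simp [Quaternion.normSq_def', Complex.mul_re, Complex.mul_im, ← Complex.ofReal_pow] <;>
      ring


/-- Unipotent element of `SL(3,ℍ)`. -/
def uptS (u v w : Quaternion ℝ) : SL3H :=
  ⟨uptU u v w, by rw [mem_SL3H]; exact detH_unipotent u v w⟩

/-- Diagonal unit. -/
def dgU (d : Fin 3 → Quaternion ℝ) (hd : ∀ i, d i ≠ 0) : (M3H)ˣ where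
  val := Matrix.diagonal d
  inv := Matrix.diagonal (fun i => (d i)⁻¹)
  val_inv := by
    rw [Matrix.diagonal_mul_diagonal,
      show (fun i => d i * (d i)⁻¹) = fun _ => (1 : Quaternion ℝ) from
        funext fun i => mul_inv_cancel₀ (hd i), Matrix.diagonal_one]
  inv_val := by
    rw [Matrix.diagonal_mul_diagonal,
      show (fun i => (d i)⁻¹ * d i) = fun _ => (1 : Quaternion ℝ) from
        funext fun i => inv_mul_cancel₀ (hd i), Matrix.diagonal_one]

/-- Diagonal element of `SL(3,ℍ)` with unit-norm entries. -/
def dgS (d : Fin 3 → Quaternion ℝ) (hd : ∀ i, Quaternion.normSq (d i) = 1) : SL3H :=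
  ⟨dgU d (fun i => Quaternion.normSq_ne_zero.mp (by rw [hd i]; norm_num)), by
    rw [mem_SL3H]
    show detH (Matrix.diagonal d) = 1
    rw [detH_diagonal]
    simp [hd]⟩

lemma mat_conj_uptS (u v w : Quaternion ℝ) (B : SL3H) :
    mat (uptS u v w * B * (uptS u v w)⁻¹)
      = (1 + EM u v w) * mat B * (1 - EM u v w + EM u v w * EM u v w) := rfl

lemma mat_conj_dgS (d : Fin 3 → Quaternion ℝ) (hd : ∀ i, Quaternion.normSq (d i) = 1)
    (B : SL3H) :
    mat (dgS d hd * B * (dgS d hd)⁻¹)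
      = Matrix.diagonal d * mat B * Matrix.diagonal (fun i => (d i)⁻¹) := rfl

lemma one_add_EM (u v w : Quaternion ℝ) : 1 + EM u v w = !![1,u,v; 0,1,w; 0,0,1] := by
  refine Matrix.ext fun i j => ?_
  fin_cases i <;> fin_cases j <;>
    simp [EM, Matrix.one_apply, Matrix.vecHead, Matrix.vecTail, Function.comp]

set_option linter.unnecessarySeqFocus false in
lemma inv_EM (u v w : Quaternion ℝ) :
    1 - EM u v w + EM u v w * EM u v w = !![1,-u,u*w - v; 0,1,-w; 0,0,1] := by
  rw [EM_sq]
  refine Matrix.ext fun i j => ?_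
  fin_cases i <;> fin_cases j <;>
    simp [EM, Matrix.one_apply, Matrix.vecHead, Matrix.vecTail, Function.comp] <;>
    noncomm_ring

set_option maxHeartbeats 1000000 in
lemma conj_upt_explicit (a b c x y z u v w : Quaternion ℝ) :
    (1 + EM u v w) * !![a,x,y; 0,b,z; 0,0,c] * (1 - EM u v w + EM u v w * EM u v w)
      = !![a, x + u*b - a*u, y + u*z + v*c - a*v - x*w - u*b*w + a*(u*w);
           0, b, z + w*c - b*w;
           0, 0, c] := by
  rw [one_add_EM, inv_EM]
  refine Matrix.ext fun i j => ?_
  fin_cases i <;> fin_cases j <;>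
    simp [Matrix.mul_apply, Fin.sum_univ_succ, Matrix.vecHead, Matrix.vecTail,
      Function.comp] <;>
    noncomm_ring

set_option maxHeartbeats 1000000 in
lemma conj_dg_explicit (a b c x y z : Quaternion ℝ) (d : Fin 3 → Quaternion ℝ) :
    Matrix.diagonal d * !![a,x,y; 0,b,z; 0,0,c] * Matrix.diagonal (fun i => (d i)⁻¹)
      = !![d 0 * a * (d 0)⁻¹, d 0 * x * (d 1)⁻¹, d 0 * y * (d 2)⁻¹;
           0, d 1 * b * (d 1)⁻¹, d 1 * z * (d 2)⁻¹;
           0, 0, d 2 * c * (d 2)⁻¹] := by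
  refine Matrix.ext fun i j => ?_
  fin_cases i <;> fin_cases j <;>
    simp [Matrix.diagonal_mul, Matrix.mul_diagonal, Matrix.mul_apply, Fin.sum_univ_succ,
      Matrix.diagonal_apply, Matrix.vecHead, Matrix.vecTail, Function.comp, mul_assoc]

open scoped Classical in
/-- Normalize to unit norm. -/
def nzu (x : Quaternion ℝ) : Quaternion ℝ :=
  if x = 0 then 1 else x * (((‖x‖ : ℝ) : Quaternion ℝ))⁻¹

lemma nzu_normSq (x : Quaternion ℝ) : Quaternion.normSq (nzu x) = 1 := by
  by_cases hx : x = 0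
  · simp [nzu, hx]
  · have hn : ‖x‖ ≠ 0 := norm_ne_zero_iff.mpr hx
    rw [nzu, if_neg hx, _root_.map_mul, map_inv₀, Quaternion.normSq_coe,
      Quaternion.normSq_eq_norm_mul_self]
    field_simp

lemma mul_nzu_inv (x : Quaternion ℝ) : x * (nzu x)⁻¹ = ((‖x‖ : ℝ) : Quaternion ℝ) := by
  by_cases hx : x = 0
  · simp [nzu, hx]
  · rw [nzu, if_neg hx, _root_.mul_inv_rev, inv_inv, ← mul_assoc, ← Quaternion.coe_commutes,
      mul_assoc, mul_inv_cancel₀ hx, mul_one]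

lemma conj_coe (p : Quaternion ℝ) (hp : p ≠ 0) (r : ℝ) : p * (r : Quaternion ℝ) * p⁻¹ = (r : Quaternion ℝ) := by
  rw [← Quaternion.coe_commutes, mul_assoc, mul_inv_cancel₀ hp, mul_one]

lemma nzu_ne_zero (x : Quaternion ℝ) : nzu x ≠ 0 :=
  Quaternion.normSq_ne_zero.mp (by rw [nzu_normSq]; norm_num)


lemma entry_x_eq (ra rb : ℝ) (x u : Quaternion ℝ) :
    x + u * ((rb : ℝ) : Quaternion ℝ) - ((ra : ℝ) : Quaternion ℝ) * u
      = x + u * (((rb - ra : ℝ)) : Quaternion ℝ) := by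
  rw [Quaternion.coe_sub, Quaternion.coe_commutes]
  noncomm_ring

lemma entry_y_eq (ra rb rc : ℝ) (x y z u v w : Quaternion ℝ) :
    y + u*z + v*((rc:ℝ) : Quaternion ℝ) - ((ra:ℝ) : Quaternion ℝ)*v - x*w
        - u*((rb:ℝ) : Quaternion ℝ)*w + ((ra:ℝ) : Quaternion ℝ)*(u*w)
      = (y + u*z - x*w + u*w*(((ra - rb : ℝ)) : Quaternion ℝ))
        + v*(((rc - ra : ℝ)) : Quaternion ℝ) := by
  rw [Quaternion.coe_sub, Quaternion.coe_sub, Quaternion.coe_commutes ra v,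
    Quaternion.coe_commutes ra (u*w), mul_assoc u (((rb:ℝ)) : Quaternion ℝ) w,
    Quaternion.coe_commutes rb w]
  noncomm_ring

lemma kill (α : ℝ) (x : Quaternion ℝ) (hα : α ≠ 0) :
    x + (-(x * (((α⁻¹ : ℝ)) : Quaternion ℝ))) * (((α : ℝ)) : Quaternion ℝ) = 0 := by
  rw [neg_mul, mul_assoc, ← Quaternion.coe_mul, inv_mul_cancel₀ hα, Quaternion.coe_one,
    mul_one, add_neg_cancel]

lemma isReal_ul (a x y b z c : Quaternion ℝ) (ha : ∃ r : ℝ, a = r) (hx : ∃ r : ℝ, x = r)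
    (hy : ∃ r : ℝ, y = r) (hb : ∃ r : ℝ, b = r) (hz : ∃ r : ℝ, z = r) (hc : ∃ r : ℝ, c = r) :
    IsRealMatrix !![a,x,y; 0,b,z; 0,0,c] := by
  intro i j
  fin_cases i <;> fin_cases j
  · simpa using ha
  · simpa using hx
  · simpa using hy
  · exact ⟨0, by simp⟩
  · simpa using hb
  · simpa using hz
  · exact ⟨0, by simp [Matrix.vecHead, Matrix.vecTail]⟩
  · exact ⟨0, by simp [Matrix.vecHead, Matrix.vecTail]⟩
  · simpa [Matrix.vecHead, Matrix.vecTail] using hc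

lemma conj2 (g₂ g₁ A : SL3H) :
    (g₂ * g₁) * A * (g₂ * g₁)⁻¹ = g₂ * (g₁ * A * g₁⁻¹) * g₂⁻¹ := by
  group


lemma entry_z_eq (rb rc : ℝ) (z w : Quaternion ℝ) :
    z + w * ((rc : ℝ) : Quaternion ℝ) - ((rb : ℝ) : Quaternion ℝ) * w
      = z + w * (((rc - rb : ℝ)) : Quaternion ℝ) := by
  rw [Quaternion.coe_sub, Quaternion.coe_commutes]
  noncomm_ring


end Aux

set_option maxHeartbeats 3000000 in
/-- An upper triangular element of `SL(3,ℍ)` all of whose diagonal entries are real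
is simple. -/
theorem sl3h_upper_triangular_real_diagonal_simple (A : SL3H)
    (hupper : ∀ i j : Fin 3, j < i → mat A i j = 0)
    (hdiag : ∀ i : Fin 3, ∃ r : ℝ, mat A i i = (r : Quaternion ℝ)) :
    ∃ h : SL3H, IsRealMatrix (mat (h * A * h⁻¹)) := by
  obtain ⟨ra, ha⟩ := hdiag 0
  obtain ⟨rb, hb⟩ := hdiag 1
  obtain ⟨rc, hc⟩ := hdiag 2
  have h10 := hupper 1 0 (by decide)
  have h20 := hupper 2 0 (by decide)
  have h21 := hupper 2 1 (by decide)
  have hA : mat A = !![(ra : Quaternion ℝ), mat A 0 1, mat A 0 2;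
      0, (rb : Quaternion ℝ), mat A 1 2; 0, 0, (rc : Quaternion ℝ)] := by
    refine Matrix.ext fun i j => ?_
    fin_cases i <;> fin_cases j <;>
      simp [ha, hb, hc, h10, h20, h21, Matrix.vecHead, Matrix.vecTail]
  set x := mat A 0 1 with hxd
  set y := mat A 0 2 with hyd
  set z := mat A 1 2 with hzd
  by_cases hγ : rc - ra = 0
  · by_cases hα : rb - ra = 0
    · -- B5 : a = b = c
      have hβ : rc - rb = 0 := by linarith
      by_cases hz0 : z = 0
      · by_cases hx0 : x = 0
        · -- B5b-ii
          set d : Fin 3 → Quaternion ℝ := ![1, 1, nzu y] with hd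
          have hdn : ∀ i, Quaternion.normSq (d i) = 1 := by
            intro i; fin_cases i <;> simp [hd, nzu_normSq]
          refine ⟨dgS d hdn, ?_⟩
          rw [mat_conj_dgS, hA, conj_dg_explicit]
          refine isReal_ul _ _ _ _ _ _ ⟨ra, by simp [hd]⟩ ⟨0, by simp [hd, hx0]⟩
            ⟨‖y‖, by simpa [hd] using mul_nzu_inv y⟩ ⟨rb, by simp [hd]⟩
            ⟨0, by simp [hd, hz0]⟩
            ⟨rc, by simpa [hd] using conj_coe (nzu y) (nzu_ne_zero y) rc⟩
        · -- B5b-i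
          set d : Fin 3 → Quaternion ℝ := ![1, nzu x, 1] with hd
          have hdn : ∀ i, Quaternion.normSq (d i) = 1 := by
            intro i; fin_cases i <;> simp [hd, nzu_normSq]
          have hs : ‖x‖ ≠ 0 := norm_ne_zero_iff.mpr hx0
          set w₂ : Quaternion ℝ := (((‖x‖⁻¹ : ℝ)) : Quaternion ℝ) * (y - ((y.re : ℝ) : Quaternion ℝ)) with hw₂
          refine ⟨uptS 0 0 w₂ * dgS d hdn, ?_⟩
          rw [conj2, mat_conj_uptS]
          have hB : mat (dgS d hdn * A * (dgS d hdn)⁻¹)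
              = !![(ra : Quaternion ℝ), ((‖x‖ : ℝ) : Quaternion ℝ), y;
                   0, (rb : Quaternion ℝ), 0; 0, 0, (rc : Quaternion ℝ)] := by
            rw [mat_conj_dgS, hA, conj_dg_explicit]
            have e1 : d 0 * (ra : Quaternion ℝ) * (d 0)⁻¹ = (ra : Quaternion ℝ) := by simp [hd]
            have e2 : d 0 * x * (d 1)⁻¹ = ((‖x‖ : ℝ) : Quaternion ℝ) := by
              simpa [hd] using mul_nzu_inv x
            have e3 : d 0 * y * (d 2)⁻¹ = y := by simp [hd]
            have e4 : d 1 * (rb : Quaternion ℝ) * (d 1)⁻¹ = (rb : Quaternion ℝ) := by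
              simpa [hd] using conj_coe (nzu x) (nzu_ne_zero x) rb
            have e5 : d 1 * z * (d 2)⁻¹ = 0 := by simp [hd, hz0]
            have e6 : d 2 * (rc : Quaternion ℝ) * (d 2)⁻¹ = (rc : Quaternion ℝ) := by simp [hd]
            rw [e1, e2, e3, e4, e5, e6]
          rw [hB, conj_upt_explicit]
          refine isReal_ul _ _ _ _ _ _ ⟨ra, rfl⟩ ⟨‖x‖, by simp⟩ ⟨y.re, ?_⟩ ⟨rb, rfl⟩
            ⟨0, ?_⟩ ⟨rc, rfl⟩
          · have k : ((‖x‖ : ℝ) : Quaternion ℝ) * w₂ = y - ((y.re : ℝ) : Quaternion ℝ) := by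
              rw [hw₂, ← mul_assoc, ← Quaternion.coe_mul, mul_inv_cancel₀ hs,
                Quaternion.coe_one, one_mul]
            simp only [zero_mul, mul_zero, add_zero, sub_zero, zero_add]
            rw [k]
            noncomm_ring
          · rw [Quaternion.coe_zero, zero_add, Quaternion.coe_commutes, ← mul_sub,
              ← Quaternion.coe_sub, hβ]
            simp
      · -- B5a : z ≠ 0
        set d : Fin 3 → Quaternion ℝ := ![1, nzu x, nzu (nzu x * z)] with hd
        have hdn : ∀ i, Quaternion.normSq (d i) = 1 := by
          intro i; fin_cases i <;> simp [hd, nzu_normSq]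
        have hs₂ : ‖nzu x * z‖ ≠ 0 :=
          norm_ne_zero_iff.mpr (mul_ne_zero (nzu_ne_zero x) hz0)
        set y₁ : Quaternion ℝ := y * (nzu (nzu x * z))⁻¹ with hy₁
        set u₂ : Quaternion ℝ :=
          -((y₁ - ((y₁.re : ℝ) : Quaternion ℝ)) * (((‖nzu x * z‖⁻¹ : ℝ)) : Quaternion ℝ)) with hu₂
        refine ⟨uptS u₂ 0 0 * dgS d hdn, ?_⟩
        rw [conj2, mat_conj_uptS]
        have hB : mat (dgS d hdn * A * (dgS d hdn)⁻¹)
            = !![(ra : Quaternion ℝ), ((‖x‖ : ℝ) : Quaternion ℝ), y₁;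
                 0, (rb : Quaternion ℝ), ((‖nzu x * z‖ : ℝ) : Quaternion ℝ);
                 0, 0, (rc : Quaternion ℝ)] := by
          rw [mat_conj_dgS, hA, conj_dg_explicit]
          have e1 : d 0 * (ra : Quaternion ℝ) * (d 0)⁻¹ = (ra : Quaternion ℝ) := by simp [hd]
          have e2 : d 0 * x * (d 1)⁻¹ = ((‖x‖ : ℝ) : Quaternion ℝ) := by
            simpa [hd] using mul_nzu_inv x
          have e3 : d 0 * y * (d 2)⁻¹ = y₁ := by simp [hd, hy₁]
          have e4 : d 1 * (rb : Quaternion ℝ) * (d 1)⁻¹ = (rb : Quaternion ℝ) := by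
            simpa [hd] using conj_coe (nzu x) (nzu_ne_zero x) rb
          have e5 : d 1 * z * (d 2)⁻¹ = ((‖nzu x * z‖ : ℝ) : Quaternion ℝ) := by
            simpa [hd, mul_assoc] using mul_nzu_inv (nzu x * z)
          have e6 : d 2 * (rc : Quaternion ℝ) * (d 2)⁻¹ = (rc : Quaternion ℝ) := by
            simpa [hd] using conj_coe (nzu (nzu x * z)) (nzu_ne_zero _) rc
          rw [e1, e2, e3, e4, e5, e6]
        rw [hB, conj_upt_explicit]
        refine isReal_ul _ _ _ _ _ _ ⟨ra, rfl⟩ ⟨‖x‖, ?_⟩ ⟨y₁.re, ?_⟩ ⟨rb, rfl⟩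
          ⟨‖nzu x * z‖, by simp⟩ ⟨rc, rfl⟩
        · rw [entry_x_eq, hα]
          simp
        · have k : u₂ * ((‖nzu x * z‖ : ℝ) : Quaternion ℝ)
              = -(y₁ - ((y₁.re : ℝ) : Quaternion ℝ)) := by
            rw [hu₂, neg_mul, mul_assoc, ← Quaternion.coe_mul, inv_mul_cancel₀ hs₂,
              Quaternion.coe_one, mul_one]
          simp only [zero_mul, mul_zero, add_zero, sub_zero, zero_add]
          rw [k]
          noncomm_ring
    · -- B4 : γ = 0, α ≠ 0
      have hβ : rc - rb ≠ 0 := fun h => hα (by linarith)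
      set u : Quaternion ℝ := -(x * ((((rb - ra)⁻¹ : ℝ)) : Quaternion ℝ)) with hu
      set w : Quaternion ℝ := -(z * ((((rc - rb)⁻¹ : ℝ)) : Quaternion ℝ)) with hw
      set S : Quaternion ℝ := y + u*z - x*w + u*w*(((ra - rb : ℝ)) : Quaternion ℝ) with hS
      set d : Fin 3 → Quaternion ℝ := ![1, 1, nzu S] with hd
      have hdn : ∀ i, Quaternion.normSq (d i) = 1 := by
        intro i; fin_cases i <;> simp [hd, nzu_normSq]
      refine ⟨dgS d hdn * uptS u 0 w, ?_⟩
      rw [conj2, mat_conj_dgS]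
      have hB : mat (uptS u 0 w * A * (uptS u 0 w)⁻¹)
          = !![(ra : Quaternion ℝ), 0, S; 0, (rb : Quaternion ℝ), 0;
               0, 0, (rc : Quaternion ℝ)] := by
        rw [mat_conj_uptS, hA, conj_upt_explicit]
        have e1 : x + u * ((rb : ℝ) : Quaternion ℝ) - ((ra : ℝ) : Quaternion ℝ) * u = 0 := by
          rw [entry_x_eq, hu]; exact kill (rb - ra) x hα
        have e3 : z + w * ((rc : ℝ) : Quaternion ℝ) - ((rb : ℝ) : Quaternion ℝ) * w = 0 := by
          rw [entry_z_eq, hw]; exact kill (rc - rb) z hβ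
        have e2 : y + u*z + 0*((rc : ℝ) : Quaternion ℝ) - ((ra : ℝ) : Quaternion ℝ)*0 - x*w
            - u*((rb : ℝ) : Quaternion ℝ)*w + ((ra : ℝ) : Quaternion ℝ)*(u*w) = S := by
          rw [entry_y_eq, ← hS]; simp
        rw [e1, e2, e3]
      rw [hB, conj_dg_explicit]
      refine isReal_ul _ _ _ _ _ _ ⟨ra, by simp [hd]⟩ ⟨0, by simp [hd]⟩
        ⟨‖S‖, by simpa [hd] using mul_nzu_inv S⟩ ⟨rb, by simp [hd]⟩ ⟨0, by simp [hd]⟩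
        ⟨rc, by simpa [hd] using conj_coe (nzu S) (nzu_ne_zero S) rc⟩
  · by_cases hα : rb - ra = 0
    · -- B2 : γ ≠ 0, α = 0 (so β ≠ 0)
      have hβ : rc - rb ≠ 0 := fun h => hγ (by linarith)
      set w : Quaternion ℝ := -(z * ((((rc - rb)⁻¹ : ℝ)) : Quaternion ℝ)) with hw
      set S : Quaternion ℝ :=
        y + (0 : Quaternion ℝ)*z - x*w
          + (0 : Quaternion ℝ)*w*(((ra - rb : ℝ)) : Quaternion ℝ) with hS
      set v : Quaternion ℝ := -(S * ((((rc - ra)⁻¹ : ℝ)) : Quaternion ℝ)) with hv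
      set d : Fin 3 → Quaternion ℝ := ![1, nzu x, 1] with hd
      have hdn : ∀ i, Quaternion.normSq (d i) = 1 := by
        intro i; fin_cases i <;> simp [hd, nzu_normSq]
      refine ⟨dgS d hdn * uptS 0 v w, ?_⟩
      rw [conj2, mat_conj_dgS]
      have hB : mat (uptS 0 v w * A * (uptS 0 v w)⁻¹)
          = !![(ra : Quaternion ℝ), x, 0; 0, (rb : Quaternion ℝ), 0;
               0, 0, (rc : Quaternion ℝ)] := by
        rw [mat_conj_uptS, hA, conj_upt_explicit]
        have e1 : x + 0 * ((rb : ℝ) : Quaternion ℝ) - ((ra : ℝ) : Quaternion ℝ) * 0 = x := by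
          simp
        have e3 : z + w * ((rc : ℝ) : Quaternion ℝ) - ((rb : ℝ) : Quaternion ℝ) * w = 0 := by
          rw [entry_z_eq, hw]; exact kill (rc - rb) z hβ
        have e2 : y + 0*z + v*((rc : ℝ) : Quaternion ℝ) - ((ra : ℝ) : Quaternion ℝ)*v - x*w
            - 0*((rb : ℝ) : Quaternion ℝ)*w + ((ra : ℝ) : Quaternion ℝ)*(0*w) = 0 := by
          rw [entry_y_eq, ← hS, hv]; exact kill (rc - ra) S hγ
        rw [e1, e2, e3]
      rw [hB, conj_dg_explicit]
      refine isReal_ul _ _ _ _ _ _ ⟨ra, by simp [hd]⟩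
        ⟨‖x‖, by simpa [hd] using mul_nzu_inv x⟩ ⟨0, by simp [hd]⟩
        ⟨rb, by simpa [hd] using conj_coe (nzu x) (nzu_ne_zero x) rb⟩
        ⟨0, by simp [hd]⟩ ⟨rc, by simp [hd]⟩
    · by_cases hβ : rc - rb = 0
      · -- B3 : γ ≠ 0, β = 0 (so α ≠ 0)
        set u : Quaternion ℝ := -(x * ((((rb - ra)⁻¹ : ℝ)) : Quaternion ℝ)) with hu
        set S : Quaternion ℝ :=
          y + u*z - x*(0 : Quaternion ℝ)
            + u*(0 : Quaternion ℝ)*(((ra - rb : ℝ)) : Quaternion ℝ) with hS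
        set v : Quaternion ℝ := -(S * ((((rc - ra)⁻¹ : ℝ)) : Quaternion ℝ)) with hv
        set d : Fin 3 → Quaternion ℝ := ![1, 1, nzu z] with hd
        have hdn : ∀ i, Quaternion.normSq (d i) = 1 := by
          intro i; fin_cases i <;> simp [hd, nzu_normSq]
        refine ⟨dgS d hdn * uptS u v 0, ?_⟩
        rw [conj2, mat_conj_dgS]
        have hB : mat (uptS u v 0 * A * (uptS u v 0)⁻¹)
            = !![(ra : Quaternion ℝ), 0, 0; 0, (rb : Quaternion ℝ), z;
                 0, 0, (rc : Quaternion ℝ)] := by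
          rw [mat_conj_uptS, hA, conj_upt_explicit]
          have e1 : x + u * ((rb : ℝ) : Quaternion ℝ) - ((ra : ℝ) : Quaternion ℝ) * u = 0 := by
            rw [entry_x_eq, hu]; exact kill (rb - ra) x hα
          have e3 : z + 0 * ((rc : ℝ) : Quaternion ℝ) - ((rb : ℝ) : Quaternion ℝ) * 0 = z := by
            simp
          have e2 : y + u*z + v*((rc : ℝ) : Quaternion ℝ) - ((ra : ℝ) : Quaternion ℝ)*v - x*0
              - u*((rb : ℝ) : Quaternion ℝ)*0 + ((ra : ℝ) : Quaternion ℝ)*(u*0) = 0 := by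
            rw [entry_y_eq, ← hS, hv]; exact kill (rc - ra) S hγ
          rw [e1, e2, e3]
        rw [hB, conj_dg_explicit]
        refine isReal_ul _ _ _ _ _ _ ⟨ra, by simp [hd]⟩ ⟨0, by simp [hd]⟩ ⟨0, by simp [hd]⟩
          ⟨rb, by simp [hd]⟩ ⟨‖z‖, by simpa [hd] using mul_nzu_inv z⟩
          ⟨rc, by simpa [hd] using conj_coe (nzu z) (nzu_ne_zero z) rc⟩
      · -- B1 : all distinct
        set u : Quaternion ℝ := -(x * ((((rb - ra)⁻¹ : ℝ)) : Quaternion ℝ)) with hu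
        set w : Quaternion ℝ := -(z * ((((rc - rb)⁻¹ : ℝ)) : Quaternion ℝ)) with hw
        set S : Quaternion ℝ := y + u*z - x*w + u*w*(((ra - rb : ℝ)) : Quaternion ℝ) with hS
        set v : Quaternion ℝ := -(S * ((((rc - ra)⁻¹ : ℝ)) : Quaternion ℝ)) with hv
        refine ⟨uptS u v w, ?_⟩
        rw [mat_conj_uptS, hA, conj_upt_explicit]
        refine isReal_ul _ _ _ _ _ _ ⟨ra, rfl⟩ ⟨0, ?_⟩ ⟨0, ?_⟩ ⟨rb, rfl⟩ ⟨0, ?_⟩ ⟨rc, rfl⟩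
        · rw [Quaternion.coe_zero, entry_x_eq, hu]
          exact kill (rb - ra) x hα
        · rw [Quaternion.coe_zero, entry_y_eq, ← hS, hv]
          exact kill (rc - ra) S hγ
        · rw [Quaternion.coe_zero, entry_z_eq, hw]
          exact kill (rc - rb) z hβ
end
end

section
/- Suppose A ∈ SL(3,ℍ) is one of the following matrices (complex entries viewed in ℍ): (i) diag(e^{iθ}, e^{iθ}, e^{iψ}) with θ ∈ [0,π] and ψ ∈ {0,π}; (ii) diag(r e^{iθ}, r⁻¹ e^{iθ}, e^{iψ}) with r ∈ ℝ, r > 0, r ≠ 1, θ ∈ [0,π] and ψ ∈ {0,π}; (iii) the matrix with rows (e^{iθ}, 1, 0), (0, e^{iθ}, 0), (0, 0, e^{iψ}) with θ, ψ ∈ {0,π}; (iv) the matrix with rows (e^{iθ}, 1, 0), (0, e^{iθ}, 1), (0, 0, e^{iθ}) with θ ∈ {0,π}. Then A is strongly reversible in SL(3,ℍ): there exists g ∈ SL(3,ℍ) with g² = I₃ and gAg⁻¹ = A⁻¹. -/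
noncomputable section

open Matrix Polynomial
open scoped Quaternion

/-- `e^{iθ} = cos θ + i sin θ` as a quaternion. -/
def eI (θ : ℝ) : Quaternion ℝ := ⟨Real.cos θ, Real.sin θ, 0, 0⟩

lemma vec6_0 {α : Type*} (a b c d e f : α) : ![a,b,c,d,e,f] 0 = a := rfl
lemma vec6_1 {α : Type*} (a b c d e f : α) : ![a,b,c,d,e,f] 1 = b := rfl
lemma vec6_2 {α : Type*} (a b c d e f : α) : ![a,b,c,d,e,f] 2 = c := rfl
lemma vec6_3 {α : Type*} (a b c d e f : α) : ![a,b,c,d,e,f] 3 = d := rfl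
lemma vec6_4 {α : Type*} (a b c d e f : α) : ![a,b,c,d,e,f] 4 = e := rfl
lemma vec6_5 {α : Type*} (a b c d e f : α) : ![a,b,c,d,e,f] 5 = f := rfl

def jq : Quaternion ℝ := ⟨0,0,1,0⟩
@[simp] lemma jq_re : jq.re = 0 := rfl
@[simp] lemma jq_imI : jq.imI = 0 := rfl
@[simp] lemma jq_imJ : jq.imJ = 1 := rfl
@[simp] lemma jq_imK : jq.imK = 0 := rfl
@[simp] lemma eI_re (θ : ℝ) : (eI θ).re = Real.cos θ := rfl
@[simp] lemma eI_imI (θ : ℝ) : (eI θ).imI = Real.sin θ := rfl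
@[simp] lemma eI_imJ (θ : ℝ) : (eI θ).imJ = 0 := rfl
@[simp] lemma eI_imK (θ : ℝ) : (eI θ).imK = 0 := rfl
def gq : M3H := !![0, jq, 0; -jq, 0, 0; 0, 0, 1]

set_option maxRecDepth 20000 in
set_option maxHeartbeats 2000000 in
lemma detH_gq : detH gq = 1 := by
  have e0 : finSumFinEquiv.symm (0:Fin 6) = (Sum.inl 0 : Fin 3 ⊕ Fin 3) := rfl
  have e1 : finSumFinEquiv.symm (1:Fin 6) = (Sum.inl 1 : Fin 3 ⊕ Fin 3) := rfl
  have e2 : finSumFinEquiv.symm (2:Fin 6) = (Sum.inl 2 : Fin 3 ⊕ Fin 3) := rfl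
  have e3 : finSumFinEquiv.symm (3:Fin 6) = (Sum.inr 0 : Fin 3 ⊕ Fin 3) := rfl
  have e4 : finSumFinEquiv.symm (4:Fin 6) = (Sum.inr 1 : Fin 3 ⊕ Fin 3) := rfl
  have e5 : finSumFinEquiv.symm (5:Fin 6) = (Sum.inr 2 : Fin 3 ⊕ Fin 3) := rfl
  have f0 : finSumFinEquiv.symm (⟨0, by norm_num⟩ : Fin 6) = (Sum.inl 0 : Fin 3 ⊕ Fin 3) := rfl
  have f1 : finSumFinEquiv.symm (⟨1, by norm_num⟩ : Fin 6) = (Sum.inl 1 : Fin 3 ⊕ Fin 3) := rfl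
  have f2 : finSumFinEquiv.symm (⟨2, by norm_num⟩ : Fin 6) = (Sum.inl 2 : Fin 3 ⊕ Fin 3) := rfl
  have f3 : finSumFinEquiv.symm (⟨3, by norm_num⟩ : Fin 6) = (Sum.inr 0 : Fin 3 ⊕ Fin 3) := rfl
  have f4 : finSumFinEquiv.symm (⟨4, by norm_num⟩ : Fin 6) = (Sum.inr 1 : Fin 3 ⊕ Fin 3) := rfl
  have f5 : finSumFinEquiv.symm (⟨5, by norm_num⟩ : Fin 6) = (Sum.inr 2 : Fin 3 ⊕ Fin 3) := rfl
  have h : (Phi gq).submatrix ⇑finSumFinEquiv.symm ⇑finSumFinEquiv.symm =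
      !![0,0,0,0,1,0; 0,0,0,-1,0,0; 0,0,1,0,0,0;
         0,-1,0,0,0,0; 1,0,0,0,0,0; 0,0,0,0,0,1] := by
    ext i j
    fin_cases i <;> fin_cases j <;>
      (first
        | rfl
        | (apply Complex.ext <;>
            simp [Phi, gq, Matrix.fromBlocks, Matrix.submatrix_apply,
              e0, e1, e2, e3, e4, e5, f0, f1, f2, f3, f4, f5, vec6_0, vec6_1, vec6_2, vec6_3, vec6_4, vec6_5, Matrix.vecHead, Matrix.vecTail]))
  have h2 := Matrix.det_submatrix_equiv_self finSumFinEquiv.symm (Phi gq)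
  rw [h] at h2
  rw [detH, ← h2]
  simp [Matrix.det_succ_row_zero, Fin.sum_univ_succ, Fin.succAbove]
  norm_num


lemma diag3 (a b c : Quaternion ℝ) :
    Matrix.diagonal ![a,b,c] = !![a,0,0; 0,b,0; 0,0,c] := by
  refine Matrix.ext fun i j => ?_
  fin_cases i <;> fin_cases j <;> simp [Matrix.diagonal, Matrix.vecHead, Matrix.vecTail]

lemma gq_sq : gq * gq = 1 := by
  rw [gq, Matrix.mul_fin_three, Matrix.one_fin_three]
  refine Matrix.ext fun i j => ?_
  fin_cases i <;> fin_cases j <;>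
    simp [Quaternion.ext_iff, Quaternion.re_mul, Quaternion.imI_mul, Quaternion.imJ_mul,
      Quaternion.imK_mul, Matrix.vecHead, Matrix.vecTail]

lemma diag_inv_key (a b θ ψ : ℝ) (hab : a * b = 1) (hψ : ψ = 0 ∨ ψ = Real.pi) :
    (Matrix.diagonal ![(a : Quaternion ℝ) * eI θ, (b : Quaternion ℝ) * eI θ, eI ψ]) *
      (gq * (Matrix.diagonal ![(a : Quaternion ℝ) * eI θ, (b : Quaternion ℝ) * eI θ, eI ψ]) * gq) = 1 := by
  have hs := Real.sin_sq_add_cos_sq θ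
  have hc : Real.cos ψ * Real.cos ψ = 1 := by
    rcases hψ with h | h <;> simp [h]
  have hsψ : Real.sin ψ = 0 := by rcases hψ with h | h <;> simp [h]
  rw [diag3, gq, Matrix.mul_fin_three, Matrix.mul_fin_three, Matrix.mul_fin_three,
    Matrix.one_fin_three]
  refine Matrix.ext fun i j => ?_
  fin_cases i <;> fin_cases j
  all_goals simp [Quaternion.ext_iff, Quaternion.re_mul, Quaternion.imI_mul,
      Quaternion.imJ_mul, Quaternion.imK_mul, Matrix.vecHead, Matrix.vecTail,
      Quaternion.re_coe, Quaternion.imI_coe, Quaternion.imJ_coe, Quaternion.imK_coe, hsψ]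
  all_goals (repeat' apply And.intro)
  all_goals nlinarith [hs, hc, hsψ, hab, sq_nonneg (Real.sin θ), sq_nonneg (Real.cos θ)]

lemma eI_zero : eI 0 = 1 := by
  simp [Quaternion.ext_iff]

lemma eI_pi : eI Real.pi = -1 := by
  simp [Quaternion.ext_iff]

lemma detH_of_real (M : M3H) (h2 : M.map q2 = 0)
    (h3 : (M.map fun x => star (q2 x)) = 0)
    (h4 : (M.map fun x => star (q1 x)) = M.map q1) :
    detH M = (M.map q1).det ^ 2 := by
  rw [detH, Phi, h2, h3, h4, neg_zero, Matrix.det_fromBlocks_zero₂₁, sq]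

def g3 : M3H := !![1,0,0; 0,-1,0; 0,0,1]

lemma g3_sq : g3 * g3 = 1 := by
  rw [g3, Matrix.mul_fin_three, Matrix.one_fin_three]
  norm_num

lemma detH_g3 : detH g3 = 1 := by
  rw [detH_of_real]
  · have : g3.map q1 = !![1,0,0;0,-1,0;0,0,1] := by
      refine Matrix.ext fun i j => ?_
      fin_cases i <;> fin_cases j <;>
        simp [g3, Complex.ext_iff, Matrix.vecHead, Matrix.vecTail]
    rw [this, Matrix.det_fin_three]
    simp
  · refine Matrix.ext fun i j => ?_
    fin_cases i <;> fin_cases j <;>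
      simp [g3, Complex.ext_iff, Matrix.vecHead, Matrix.vecTail]
  · refine Matrix.ext fun i j => ?_
    fin_cases i <;> fin_cases j <;>
      simp [g3, Complex.ext_iff, Matrix.vecHead, Matrix.vecTail]
  · refine Matrix.ext fun i j => ?_
    fin_cases i <;> fin_cases j <;>
      simp [g3, Complex.ext_iff, Matrix.vecHead, Matrix.vecTail]

lemma case3_key (ε δ : Quaternion ℝ) (hε : ε * ε = 1) (hδ : δ * δ = 1) :
    !![ε,1,0; 0,ε,0; 0,0,δ] * (g3 * !![ε,1,0; 0,ε,0; 0,0,δ] * g3) = 1 := by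
  rw [g3, Matrix.mul_fin_three, Matrix.mul_fin_three, Matrix.mul_fin_three,
    Matrix.one_fin_three]
  refine Matrix.ext fun i j => ?_
  fin_cases i <;> fin_cases j <;>
    simp [hε, hδ, Matrix.vecHead, Matrix.vecTail]

def g4 (ε : Quaternion ℝ) : M3H := !![1,ε,0; 0,-1,0; 0,0,1]

lemma g4_sq (ε : Quaternion ℝ) : g4 ε * g4 ε = 1 := by
  rw [g4, Matrix.mul_fin_three, Matrix.one_fin_three]
  refine Matrix.ext fun i j => ?_
  fin_cases i <;> fin_cases j <;>
    simp [Matrix.vecHead, Matrix.vecTail]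

lemma detH_g4 (ε : Quaternion ℝ) (h : ε = 1 ∨ ε = -1) : detH (g4 ε) = 1 := by
  have hmap : (g4 ε).map q1 = !![1, q1 ε, 0; 0,-1,0; 0,0,1] := by
    refine Matrix.ext fun i j => ?_
    fin_cases i <;> fin_cases j <;>
      simp [g4, Complex.ext_iff, Matrix.vecHead, Matrix.vecTail]
  have hε1 : (ε.imI = 0 ∧ ε.imJ = 0 ∧ ε.imK = 0) := by
    rcases h with h | h <;> simp [h, Quaternion.ext_iff]
  rw [detH_of_real]
  · rw [hmap, Matrix.det_fin_three]
    simp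
  · refine Matrix.ext fun i j => ?_
    fin_cases i <;> fin_cases j <;>
      simp [g4, Complex.ext_iff, Matrix.vecHead, Matrix.vecTail, hε1.2.1, hε1.2.2]
  · refine Matrix.ext fun i j => ?_
    fin_cases i <;> fin_cases j <;>
      simp [g4, Complex.ext_iff, Matrix.vecHead, Matrix.vecTail, hε1.2.1, hε1.2.2]
  · refine Matrix.ext fun i j => ?_
    fin_cases i <;> fin_cases j <;>
      simp [g4, Complex.ext_iff, Matrix.vecHead, Matrix.vecTail, hε1.1]

lemma case4_key (ε : Quaternion ℝ) (hε : ε * ε = 1) :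
    !![ε,1,0; 0,ε,1; 0,0,ε] * (g4 ε * !![ε,1,0; 0,ε,1; 0,0,ε] * g4 ε) = 1 := by
  rw [g4, Matrix.mul_fin_three, Matrix.mul_fin_three, Matrix.mul_fin_three,
    Matrix.one_fin_three]
  refine Matrix.ext fun i j => ?_
  fin_cases i <;> fin_cases j <;>
    simp [Matrix.vecHead, Matrix.vecTail, mul_assoc, hε]

lemma eI_sq {θ : ℝ} (h : θ = 0 ∨ θ = Real.pi) : eI θ * eI θ = 1 := by
  rcases h with h | h <;> simp [h, eI_zero, eI_pi]

lemma build_rev (A : SL3H) (gm : M3H) (hg : gm * gm = 1) (hdet : detH gm = 1)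
    (hinv : mat A * (gm * mat A * gm) = 1) :
    ∃ g : SL3H, mat g * mat g = 1 ∧ g * A * g⁻¹ = A⁻¹ := by
  let gu : (M3H)ˣ := ⟨gm, gm, hg, hg⟩
  refine ⟨⟨gu, mem_SL3H.mpr hdet⟩, hg, ?_⟩
  apply Subtype.ext
  apply Units.ext
  show gm * mat A * gm = _
  exact (Units.inv_eq_of_mul_eq_one_right (by rw [← mul_assoc] at hinv ⊢; exact hinv)).symm

/-- The listed Jordan forms are strongly reversible in `SL(3,ℍ)`. -/
theorem sl3h_strongly_reversible_of_listed_form (A : SL3H)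
    (hA : (∃ θ ψ : ℝ, θ ∈ Set.Icc 0 Real.pi ∧ (ψ = 0 ∨ ψ = Real.pi) ∧
        mat A = Matrix.diagonal ![eI θ, eI θ, eI ψ]) ∨
      (∃ r θ ψ : ℝ, 0 < r ∧ r ≠ 1 ∧ θ ∈ Set.Icc 0 Real.pi ∧ (ψ = 0 ∨ ψ = Real.pi) ∧
        mat A = Matrix.diagonal
          ![(r : Quaternion ℝ) * eI θ, ((r⁻¹ : ℝ) : Quaternion ℝ) * eI θ, eI ψ]) ∨
      (∃ θ ψ : ℝ, (θ = 0 ∨ θ = Real.pi) ∧ (ψ = 0 ∨ ψ = Real.pi) ∧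
        mat A = !![eI θ, 1, 0; 0, eI θ, 0; 0, 0, eI ψ]) ∨
      (∃ θ : ℝ, (θ = 0 ∨ θ = Real.pi) ∧
        mat A = !![eI θ, 1, 0; 0, eI θ, 1; 0, 0, eI θ])) :
    ∃ g : SL3H, mat g * mat g = 1 ∧ g * A * g⁻¹ = A⁻¹ := by
  rcases hA with ⟨θ, ψ, hθ, hψ, hA⟩ | ⟨r, θ, ψ, hr, hr1, hθ, hψ, hA⟩ |
    ⟨θ, ψ, hθ, hψ, hA⟩ | ⟨θ, hθ, hA⟩
  · refine build_rev A gq gq_sq detH_gq ?_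
    rw [hA]
    simpa using diag_inv_key 1 1 θ ψ (by norm_num) hψ
  · refine build_rev A gq gq_sq detH_gq ?_
    rw [hA]
    exact diag_inv_key r r⁻¹ θ ψ (mul_inv_cancel₀ hr.ne') hψ
  · refine build_rev A g3 g3_sq detH_g3 ?_
    rw [hA]
    exact case3_key _ _ (eI_sq hθ) (eI_sq hψ)
  · refine build_rev A (g4 (eI θ)) (g4_sq _) (detH_g4 _ ?_) ?_
    · rcases hθ with h | h <;> simp [h, eI_zero, eI_pi]
    · rw [hA]
      exact case4_key _ (eI_sq hθ)
end
end

section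
/- Suppose A ∈ SL(3,ℍ) is one of the following matrices (complex entries viewed in ℍ): (1) e^{iθ}·I₃ with θ ∈ (0,π); (2) diag(e^{iθ}, e^{iφ}, e^{iψ}) with θ ≠ φ, θ ≠ ψ, θ ∈ (0,π), φ, ψ ∈ [0,π]; (3) diag(r e^{iθ}, r⁻¹ e^{iθ}, e^{iψ}) with r > 0, r ≠ 1, θ ∈ [0,π], ψ ∈ (0,π); (4) the matrix with rows (e^{iθ}, 1, 0), (0, e^{iθ}, 0), (0, 0, e^{iψ}) with θ ∈ {0,π}, ψ ∈ (0,π); (5) the matrix with rows (e^{iθ}, 1, 0), (0, e^{iθ}, 0), (0, 0, e^{iψ}) with θ ≠ ψ, θ ∈ (0,π), ψ ∈ [0,π]; (6) the matrix with rows (e^{iθ}, 1, 0), (0, e^{iθ}, 0), (0, 0, e^{iθ}) with θ ∈ (0,π); (7) the matrix with rows (e^{iθ}, 1, 0), (0, e^{iθ}, 1), (0, 0, e^{iθ}) with θ ∈ (0,π). Then A is not strongly reversible in SL(3,ℍ): there is no g ∈ SL(3,ℍ) with g² = I₃ and gAg⁻¹ = A⁻¹. -/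
noncomputable section

open Matrix Polynomial

attribute [local simp] Quaternion.re_zero Quaternion.imI_zero Quaternion.imJ_zero Quaternion.imK_zero
  Quaternion.re_one Quaternion.imI_one Quaternion.imJ_one Quaternion.imK_one

/-- `e^{ia}` as a complex number. -/
def E (a : ℝ) : ℂ := Complex.exp (a * Complex.I)

lemma E_mul_E (a b : ℝ) : E a * E b = E (a + b) := by
  rw [E, E, E, ← Complex.exp_add]; push_cast; ring_nf

lemma E_ne_zero (a : ℝ) : E a ≠ 0 := Complex.exp_ne_zero _

lemma E_re (a : ℝ) : (E a).re = Real.cos a := Complex.exp_ofReal_mul_I_re a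

lemma E_ne_one {x : ℝ} (h0 : x ≠ 0) (h1 : -(2*Real.pi) < x) (h2 : x < 2*Real.pi) :
    E x ≠ 1 := by
  intro h
  exact h0 ((Real.cos_eq_one_iff_of_lt_of_lt h1 h2).1
    (by rw [← E_re, h]; simp))

lemma rE_ne_one {r : ℝ} (hr : 0 < r) (hr1 : r ≠ 1) (a : ℝ) : (r:ℂ) * E a ≠ 1 := by
  intro h
  apply hr1
  have := congrArg norm h
  simpa [E, norm_mul, Complex.norm_real, Complex.norm_exp_ofReal_mul_I,
    abs_of_pos hr] using this

lemma q1_eI (a : ℝ) : q1 (eI a) = E a := by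
  rw [q1_apply]; apply Complex.ext <;> simp [eI, E]

lemma q2_eI (a : ℝ) : q2 (eI a) = 0 := by
  rw [q2_apply]; apply Complex.ext <;> simp [eI]

lemma star_E (a : ℝ) : star (E a) = E (-a) := by
  rw [E, E, Complex.star_def, ← Complex.exp_conj]
  congr 1
  simp

lemma quat_eq_zero {q : Quaternion ℝ} (h1 : q1 q = 0) (h2 : q2 q = 0) : q = 0 := by
  rw [Complex.ext_iff] at h1 h2
  simp only [q1_apply, q2_apply, Complex.zero_re, Complex.zero_im] at h1 h2
  ext <;> simp [h1.1, h1.2, h2.1, h2.2]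

lemma aux_eq_zero {z w : ℂ} (h : z * w = w) (hz : z ≠ 1) : w = 0 := by
  have h' : (z - 1) * w = 0 := by ring_nf; linear_combination h
  rcases mul_eq_zero.1 h' with h'' | h''
  · exact absurd (sub_eq_zero.1 h'') hz
  · exact h''
lemma row_contra {g : M3H} (hg : g * g = 1) (m : Fin 3)
    (h1 : ∀ k, k ≠ m → g m k = 0) (h2 : q1 (g m m) = 0) : False := by
  have h3 : (g * g) m m = 1 := by rw [hg]; simp [Matrix.one_apply]
  rw [Matrix.mul_apply,
    Finset.sum_eq_single m (fun k _ hk => by rw [h1 k hk, zero_mul])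
      (by simp)] at h3
  have h4 := congrArg q1 h3
  rw [q1_mul, h2, q1_one, mul_zero, zero_sub] at h4
  have h5 := congrArg Complex.re h4
  rw [Complex.star_def, Complex.mul_conj] at h5
  simp only [Complex.neg_re, Complex.ofReal_re, Complex.one_re] at h5
  nlinarith [Complex.normSq_nonneg (q2 (g m m))]

lemma q1zero_contra {g : M3H} (hg : g * g = 1) (h : ∀ i j, q1 (g i j) = 0) :
    False := by
  have hPhi : Phi g * Phi g = 1 := by rw [← Phi_mul, hg, Phi_one]
  have h1 : g.map q1 = 0 := by ext i j; simp [Matrix.map_apply, h]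
  have h1' : (g.map fun x => star (q1 x)) = 0 := by
    ext i j; simp only [Matrix.map_apply, Matrix.zero_apply, h i j, star_zero]
  rw [Phi, h1, h1', ← Matrix.fromBlocks_one, Matrix.fromBlocks_multiply] at hPhi
  have h11 := congrArg Matrix.toBlocks₁₁ hPhi
  rw [Matrix.toBlocks_fromBlocks₁₁, Matrix.toBlocks_fromBlocks₁₁] at h11
  set B := g.map q2 with hBdef
  set C := g.map fun x => star (q2 x) with hCdef
  have h12 : B * (-C) = 1 := by
    rw [Matrix.zero_mul, zero_add] at h11; exact h11
  have hC : C = B.map (starRingEnd ℂ) := by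
    ext i j; simp [Matrix.map_apply, hBdef, hCdef, Complex.star_def]
  have hdet := congrArg Matrix.det h12
  have hmapdet : (B.map (starRingEnd ℂ)).det = (starRingEnd ℂ) B.det := by
    have := (starRingEnd ℂ).map_det B
    simpa [RingHom.mapMatrix_apply] using this.symm
  rw [Matrix.det_mul, Matrix.det_neg, hC, hmapdet, Matrix.det_one] at hdet
  have hkey : -(Matrix.det B * (starRingEnd ℂ) (Matrix.det B)) = 1 := by
    simp only [Fintype.card_fin] at hdet
    linear_combination hdet
  rw [Complex.mul_conj] at hkey
  have hre := congrArg Complex.re hkey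
  simp only [Complex.neg_re, Complex.ofReal_re, Complex.one_re] at hre
  nlinarith [Complex.normSq_nonneg (Matrix.det B)]
lemma gen_q1 {x y z : Quaternion ℝ} (h : y * x * z = x) (hy2 : q2 y = 0)
    (hz2 : q2 z = 0) (hne : q1 y * q1 z ≠ 1) : q1 x = 0 := by
  have h' := congrArg q1 h
  simp only [q1_mul, q2_mul, hy2, hz2, star_zero, mul_zero, zero_mul, sub_zero,
    add_zero, zero_add] at h'
  exact aux_eq_zero (by linear_combination h') hne

lemma gen_q2 {x y z : Quaternion ℝ} (h : y * x * z = x) (hy2 : q2 y = 0)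
    (hz2 : q2 z = 0) (hne : q1 y * star (q1 z) ≠ 1) : q2 x = 0 := by
  have h' := congrArg q2 h
  simp only [q1_mul, q2_mul, hy2, hz2, star_zero, mul_zero, zero_mul, sub_zero,
    add_zero, zero_add] at h'
  exact aux_eq_zero (by linear_combination h') hne

lemma gen_zero {x y z : Quaternion ℝ} (h : y * x * z = x) (hy2 : q2 y = 0)
    (hz2 : q2 z = 0) (hne1 : q1 y * q1 z ≠ 1) (hne2 : q1 y * star (q1 z) ≠ 1) :
    x = 0 :=
  quat_eq_zero (gen_q1 h hy2 hz2 hne1) (gen_q2 h hy2 hz2 hne2)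

lemma q1_r_eI (s b : ℝ) : q1 ((s : Quaternion ℝ) * eI b) = s * E b := by
  rw [q1_apply, Quaternion.re_mul, Quaternion.imI_mul]
  apply Complex.ext <;>
    simp [eI, E, Quaternion.re_mul, Quaternion.imI_mul, Complex.mul_re, Complex.mul_im]

lemma q2_r_eI (s b : ℝ) : q2 ((s : Quaternion ℝ) * eI b) = 0 := by
  rw [q2_apply, Quaternion.imJ_mul, Quaternion.imK_mul]
  apply Complex.ext <;>
    simp [eI, Quaternion.imJ_mul, Quaternion.imK_mul]

lemma star_E' (a : ℝ) : (starRingEnd ℂ) (E a) = E (-a) := star_E a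

lemma E_zero : E 0 = 1 := by simp [E]

lemma E_mul_E_neg (a : ℝ) : E a * E (-a) = 1 := by
  rw [E_mul_E, add_neg_cancel, E_zero]

lemma Eab_ne_one {a b : ℝ} (h0 : 0 < a + b) (h2 : a + b < 2*Real.pi) :
    E a * E b ≠ 1 := by
  rw [E_mul_E]; exact E_ne_one h0.ne' (by nlinarith [Real.pi_pos]) h2

lemma EastarEb_ne_one {a b : ℝ} (h0 : a ≠ b) (h1 : -(2*Real.pi) < a - b)
    (h2 : a - b < 2*Real.pi) : E a * star (E b) ≠ 1 := by
  rw [star_E, E_mul_E]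
  exact E_ne_one (by intro h; exact h0 (by linarith)) (by linarith) (by linarith)
set_option maxHeartbeats 1600000 in
/-- The listed Jordan forms are not strongly reversible in `SL(3,ℍ)`. -/
theorem sl3h_not_strongly_reversible_of_listed_form (A : SL3H)
    (hA : (∃ θ : ℝ, θ ∈ Set.Ioo 0 Real.pi ∧
        mat A = Matrix.diagonal ![eI θ, eI θ, eI θ]) ∨
      (∃ θ φ ψ : ℝ, θ ≠ φ ∧ θ ≠ ψ ∧ θ ∈ Set.Ioo 0 Real.pi ∧ φ ∈ Set.Icc 0 Real.pi ∧
        ψ ∈ Set.Icc 0 Real.pi ∧ mat A = Matrix.diagonal ![eI θ, eI φ, eI ψ]) ∨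
      (∃ r θ ψ : ℝ, 0 < r ∧ r ≠ 1 ∧ θ ∈ Set.Icc 0 Real.pi ∧ ψ ∈ Set.Ioo 0 Real.pi ∧
        mat A = Matrix.diagonal
          ![(r : Quaternion ℝ) * eI θ, ((r⁻¹ : ℝ) : Quaternion ℝ) * eI θ, eI ψ]) ∨
      (∃ θ ψ : ℝ, (θ = 0 ∨ θ = Real.pi) ∧ ψ ∈ Set.Ioo 0 Real.pi ∧
        mat A = !![eI θ, 1, 0; 0, eI θ, 0; 0, 0, eI ψ]) ∨
      (∃ θ ψ : ℝ, θ ≠ ψ ∧ θ ∈ Set.Ioo 0 Real.pi ∧ ψ ∈ Set.Icc 0 Real.pi ∧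
        mat A = !![eI θ, 1, 0; 0, eI θ, 0; 0, 0, eI ψ]) ∨
      (∃ θ : ℝ, θ ∈ Set.Ioo 0 Real.pi ∧
        mat A = !![eI θ, 1, 0; 0, eI θ, 0; 0, 0, eI θ]) ∨
      (∃ θ : ℝ, θ ∈ Set.Ioo 0 Real.pi ∧
        mat A = !![eI θ, 1, 0; 0, eI θ, 1; 0, 0, eI θ])) :
    ¬ ∃ g : SL3H, mat g * mat g = 1 ∧ g * A * g⁻¹ = A⁻¹ := by
  rintro ⟨g, hgsq, hrev⟩
  have h2 : A * g * A = g := by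
    have h : A * (g * A * g⁻¹) * g = A * A⁻¹ * g := by rw [hrev]
    group at h
    exact h
  have hM : mat A * mat g * mat A = mat g := by
    have := congrArg mat h2
    simpa only [mat, MulMemClass.coe_mul, Units.val_mul] using this
  have hpi := Real.pi_pos
  rcases hA with ⟨θ, hθ, hAeq⟩ | ⟨θ, φ, ψ, hθφ, hθψ, hθ, hφ, hψ, hAeq⟩ |
    ⟨r, θ, ψ, hr, hr1, hθ, hψ, hAeq⟩ | ⟨θ, ψ, hθ, hψ, hAeq⟩ |
    ⟨θ, ψ, hθψ, hθ, hψ, hAeq⟩ | ⟨θ, hθ, hAeq⟩ | ⟨θ, hθ, hAeq⟩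
  -- Case 1 : e^{iθ} I
  · rw [hAeq] at hM
    obtain ⟨hθ1, hθ2⟩ := hθ
    refine q1zero_contra hgsq fun i j => ?_
    have e := Matrix.ext_iff.mpr hM i j
    rw [Matrix.mul_diagonal, Matrix.diagonal_mul] at e
    have hv : ∀ k : Fin 3, ![eI θ, eI θ, eI θ] k = eI θ := by
      intro k; fin_cases k <;> simp
    rw [hv i, hv j] at e
    exact gen_q1 e (q2_eI θ) (q2_eI θ)
      (by simp only [q1_eI]; exact Eab_ne_one (by linarith) (by linarith))
  -- Case 2 : diag(e^{iθ}, e^{iφ}, e^{iψ})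
  · rw [hAeq] at hM
    obtain ⟨hθ1, hθ2⟩ := hθ
    obtain ⟨hφ1, hφ2⟩ := hφ
    obtain ⟨hψ1, hψ2⟩ := hψ
    have e00 := Matrix.ext_iff.mpr hM 0 0
    have e01 := Matrix.ext_iff.mpr hM 0 1
    have e02 := Matrix.ext_iff.mpr hM 0 2
    rw [Matrix.mul_diagonal, Matrix.diagonal_mul] at e00 e01 e02
    simp only [Matrix.cons_val_zero, Matrix.cons_val_one, Matrix.head_cons,
      Matrix.cons_val_two, Matrix.tail_cons] at e00 e01 e02
    have hq00 : q1 (mat g 0 0) = 0 :=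
      gen_q1 e00 (q2_eI θ) (q2_eI θ)
        (by simp only [q1_eI]; exact Eab_ne_one (by linarith) (by linarith))
    have hg01 : mat g 0 1 = 0 :=
      gen_zero e01 (q2_eI θ) (q2_eI φ)
        (by simp only [q1_eI]; exact Eab_ne_one (by linarith) (by linarith))
        (by simp only [q1_eI]; exact EastarEb_ne_one hθφ (by linarith) (by linarith))
    have hg02 : mat g 0 2 = 0 :=
      gen_zero e02 (q2_eI θ) (q2_eI ψ)
        (by simp only [q1_eI]; exact Eab_ne_one (by linarith) (by linarith))
        (by simp only [q1_eI]; exact EastarEb_ne_one hθψ (by linarith) (by linarith))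
    refine row_contra hgsq 0 ?_ hq00
    intro k hk
    fin_cases k
    · exact absurd rfl hk
    · exact hg01
    · exact hg02
  -- Case 3 : diag(r e^{iθ}, r⁻¹ e^{iθ}, e^{iψ})
  · rw [hAeq] at hM
    obtain ⟨hθ1, hθ2⟩ := hθ
    obtain ⟨hψ1, hψ2⟩ := hψ
    have e20 := Matrix.ext_iff.mpr hM 2 0
    have e21 := Matrix.ext_iff.mpr hM 2 1
    have e22 := Matrix.ext_iff.mpr hM 2 2
    rw [Matrix.mul_diagonal, Matrix.diagonal_mul] at e20 e21 e22
    simp only [Matrix.cons_val_zero, Matrix.cons_val_one, Matrix.head_cons,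
      Matrix.cons_val_two, Matrix.tail_cons] at e20 e21 e22
    have habs : ∀ s x : ℝ, 0 < s → s ≠ 1 → E ψ * (↑s * E x) ≠ 1 := by
      intro s x hs hs1 h
      exact rE_ne_one hs hs1 (ψ + x) (by rw [← E_mul_E]; linear_combination h)
    have habs' : ∀ s x : ℝ, 0 < s → s ≠ 1 → E ψ * star (↑s * E x) ≠ 1 := by
      intro s x hs hs1 h
      rw [star_mul', star_E, Complex.star_def, Complex.conj_ofReal] at h
      exact rE_ne_one hs hs1 (ψ + -x) (by rw [← E_mul_E]; linear_combination h)
    have hg20 : mat g 2 0 = 0 :=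
      gen_zero e20 (q2_eI ψ) (q2_r_eI r θ)
        (by simp only [q1_eI, q1_r_eI]; exact habs r θ hr hr1)
        (by simp only [q1_eI, q1_r_eI]; exact habs' r θ hr hr1)
    have hg21 : mat g 2 1 = 0 :=
      gen_zero e21 (q2_eI ψ) (q2_r_eI r⁻¹ θ)
        (by simp only [q1_eI, q1_r_eI]; exact habs r⁻¹ θ (by positivity) (by simpa using hr1))
        (by simp only [q1_eI, q1_r_eI]; exact habs' r⁻¹ θ (by positivity) (by simpa using hr1))
    have hq22 : q1 (mat g 2 2) = 0 :=
      gen_q1 e22 (q2_eI ψ) (q2_eI ψ)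
        (by simp only [q1_eI]; exact Eab_ne_one (by linarith) (by linarith))
    refine row_contra hgsq 2 ?_ hq22
    intro k hk
    fin_cases k
    · exact hg20
    · exact hg21
    · exact absurd rfl hk
  -- Case 4 : Jordan [[e^{iθ},1],[0,e^{iθ}]] ⊕ [e^{iψ}], θ ∈ {0, π}
  · rw [hAeq] at hM
    obtain ⟨hψ1, hψ2⟩ := hψ
    have hθ1 : 0 ≤ θ := by
      rcases hθ with h | h
      · exact le_of_eq h.symm
      · rw [h]; linarith
    have hθ2 : θ ≤ Real.pi := by
      rcases hθ with h | h
      · rw [h]; linarith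
      · exact le_of_eq h
    have hθψ : θ ≠ ψ := by
      rcases hθ with h | h
      · subst h; exact fun h' => hψ1.ne' h'.symm
      · subst h; exact fun h' => hψ2.ne h'.symm
    have e20 := Matrix.ext_iff.mpr hM 2 0
    have e21 := Matrix.ext_iff.mpr hM 2 1
    have e22 := Matrix.ext_iff.mpr hM 2 2
    simp [Matrix.mul_apply, Fin.sum_univ_three, Matrix.vecMul, Matrix.vecHead,
      Matrix.vecTail, dotProduct] at e20 e21 e22
    have hg20 : mat g 2 0 = 0 :=
      gen_zero e20 (q2_eI ψ) (q2_eI θ)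
        (by simp only [q1_eI]; exact Eab_ne_one (by linarith) (by linarith))
        (by simp only [q1_eI]
            exact EastarEb_ne_one (Ne.symm hθψ) (by linarith) (by linarith))
    rw [hg20, mul_zero, zero_add] at e21
    have hg21 : mat g 2 1 = 0 :=
      gen_zero e21 (q2_eI ψ) (q2_eI θ)
        (by simp only [q1_eI]; exact Eab_ne_one (by linarith) (by linarith))
        (by simp only [q1_eI]
            exact EastarEb_ne_one (Ne.symm hθψ) (by linarith) (by linarith))
    have hq22 : q1 (mat g 2 2) = 0 :=
      gen_q1 e22 (q2_eI ψ) (q2_eI ψ)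
        (by simp only [q1_eI]; exact Eab_ne_one (by linarith) (by linarith))
    refine row_contra hgsq 2 ?_ hq22
    intro k hk
    fin_cases k
    · exact hg20
    · exact hg21
    · exact absurd rfl hk
  -- Case 5 : Jordan [[e^{iθ},1],[0,e^{iθ}]] ⊕ [e^{iψ}], θ ∈ (0,π), θ ≠ ψ
  · rw [hAeq] at hM
    obtain ⟨hθ1, hθ2⟩ := hθ
    obtain ⟨hψ1, hψ2⟩ := hψ
    have e10 := Matrix.ext_iff.mpr hM 1 0
    have e11 := Matrix.ext_iff.mpr hM 1 1
    have e12 := Matrix.ext_iff.mpr hM 1 2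
    simp [Matrix.mul_apply, Fin.sum_univ_three, Matrix.vecMul, Matrix.vecHead,
      Matrix.vecTail, dotProduct] at e10 e11 e12
    -- e10 : eI θ * G 1 0 * eI θ = G 1 0
    -- e11 : eI θ * G 1 0 + eI θ * G 1 1 * eI θ = G 1 1
    -- e12 : eI θ * G 1 2 * eI ψ = G 1 2
    have hq10 : q1 (mat g 1 0) = 0 :=
      gen_q1 e10 (q2_eI θ) (q2_eI θ)
        (by simp only [q1_eI]; exact Eab_ne_one (by linarith) (by linarith))
    have hq10' : q2 (mat g 1 0) = 0 := by
      have c := congrArg q2 e11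
      simp only [map_add, q1_mul, q2_mul, q1_eI, q2_eI, star_zero, star_E,
        mul_zero, zero_mul, sub_zero, add_zero, zero_add] at c
      have : E θ * q2 (mat g 1 0) = 0 := by
        linear_combination c - q2 (mat g 1 1) * E_mul_E_neg θ
      rcases mul_eq_zero.1 this with h | h
      · exact absurd h (E_ne_zero θ)
      · exact h
    have hg10 : mat g 1 0 = 0 := quat_eq_zero hq10 hq10'
    rw [hg10, mul_zero, zero_add] at e11
    have hq11 : q1 (mat g 1 1) = 0 :=
      gen_q1 e11 (q2_eI θ) (q2_eI θ)
        (by simp only [q1_eI]; exact Eab_ne_one (by linarith) (by linarith))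
    have hg12 : mat g 1 2 = 0 :=
      gen_zero e12 (q2_eI θ) (q2_eI ψ)
        (by simp only [q1_eI]; exact Eab_ne_one (by linarith) (by linarith))
        (by simp only [q1_eI]; exact EastarEb_ne_one hθψ (by linarith) (by linarith))
    refine row_contra hgsq 1 ?_ hq11
    intro k hk
    fin_cases k
    · exact hg10
    · exact absurd rfl hk
    · exact hg12
  -- Case 6 : Jordan [[e^{iθ},1],[0,e^{iθ}]] ⊕ [e^{iθ}]
  · rw [hAeq] at hM
    obtain ⟨hθ1, hθ2⟩ := hθ
    have hne : q1 (eI θ) * q1 (eI θ) ≠ 1 := by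
      simp only [q1_eI]; exact Eab_ne_one (by linarith) (by linarith)
    have hneE : E θ * E θ ≠ 1 := by rw [← q1_eI θ]; exact hne
    have e00 := Matrix.ext_iff.mpr hM 0 0
    have e01 := Matrix.ext_iff.mpr hM 0 1
    have e02 := Matrix.ext_iff.mpr hM 0 2
    have e10 := Matrix.ext_iff.mpr hM 1 0
    have e11 := Matrix.ext_iff.mpr hM 1 1
    have e12 := Matrix.ext_iff.mpr hM 1 2
    have e20 := Matrix.ext_iff.mpr hM 2 0
    have e21 := Matrix.ext_iff.mpr hM 2 1
    have e22 := Matrix.ext_iff.mpr hM 2 2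
    simp [Matrix.mul_apply, Fin.sum_univ_three, Matrix.vecMul, Matrix.vecHead,
      Matrix.vecTail, dotProduct] at e00 e01 e02 e10 e11 e12 e20 e21 e22
    have hq10 : q1 (mat g 1 0) = 0 := gen_q1 e10 (q2_eI θ) (q2_eI θ) hne
    have hq12 : q1 (mat g 1 2) = 0 := gen_q1 e12 (q2_eI θ) (q2_eI θ) hne
    have hq20 : q1 (mat g 2 0) = 0 := gen_q1 e20 (q2_eI θ) (q2_eI θ) hne
    have hq22 : q1 (mat g 2 2) = 0 := gen_q1 e22 (q2_eI θ) (q2_eI θ) hne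
    have hq11 : q1 (mat g 1 1) = 0 := by
      have c := congrArg q1 e11
      simp only [map_add, q1_mul, q2_mul, q1_eI, q2_eI, star_zero, star_E,
        mul_zero, zero_mul, sub_zero, add_zero, zero_add, hq10] at c
      exact aux_eq_zero (z := E θ * E θ) (by linear_combination c) hneE
    have hq21 : q1 (mat g 2 1) = 0 := by
      have c := congrArg q1 e21
      simp only [map_add, q1_mul, q2_mul, q1_eI, q2_eI, star_zero, star_E,
        mul_zero, zero_mul, sub_zero, add_zero, zero_add, hq20] at c
      exact aux_eq_zero (z := E θ * E θ) (by linear_combination c) hneE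
    have hq00 : q1 (mat g 0 0) = 0 := by
      have c := congrArg q1 e00
      simp only [map_add, q1_mul, q2_mul, q1_eI, q2_eI, star_zero, star_E,
        mul_zero, zero_mul, sub_zero, add_zero, zero_add, hq10] at c
      exact aux_eq_zero (z := E θ * E θ) (by linear_combination c) hneE
    have hq02 : q1 (mat g 0 2) = 0 := by
      have c := congrArg q1 e02
      simp only [map_add, q1_mul, q2_mul, q1_eI, q2_eI, star_zero, star_E,
        mul_zero, zero_mul, sub_zero, add_zero, zero_add, hq12] at c
      exact aux_eq_zero (z := E θ * E θ) (by linear_combination c) hneE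
    have hq01 : q1 (mat g 0 1) = 0 := by
      have c := congrArg q1 e01
      simp only [map_add, q1_mul, q2_mul, q1_eI, q2_eI, star_zero, star_E,
        mul_zero, zero_mul, sub_zero, add_zero, zero_add, hq00, hq10, hq11] at c
      exact aux_eq_zero (z := E θ * E θ) (by linear_combination c) hneE
    refine q1zero_contra hgsq fun i j => ?_
    fin_cases i <;> fin_cases j <;> assumption
  -- Case 7 : full Jordan block
  · rw [hAeq] at hM
    obtain ⟨hθ1, hθ2⟩ := hθ
    have hne : q1 (eI θ) * q1 (eI θ) ≠ 1 := by
      simp only [q1_eI]; exact Eab_ne_one (by linarith) (by linarith)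
    have hneE : E θ * E θ ≠ 1 := by rw [← q1_eI θ]; exact hne
    have e00 := Matrix.ext_iff.mpr hM 0 0
    have e01 := Matrix.ext_iff.mpr hM 0 1
    have e02 := Matrix.ext_iff.mpr hM 0 2
    have e10 := Matrix.ext_iff.mpr hM 1 0
    have e11 := Matrix.ext_iff.mpr hM 1 1
    have e12 := Matrix.ext_iff.mpr hM 1 2
    have e20 := Matrix.ext_iff.mpr hM 2 0
    have e21 := Matrix.ext_iff.mpr hM 2 1
    have e22 := Matrix.ext_iff.mpr hM 2 2
    simp [Matrix.mul_apply, Fin.sum_univ_three, Matrix.vecMul, Matrix.vecHead,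
      Matrix.vecTail, dotProduct] at e00 e01 e02 e10 e11 e12 e20 e21 e22
    have hq20 : q1 (mat g 2 0) = 0 := gen_q1 e20 (q2_eI θ) (q2_eI θ) hne
    have hq21 : q1 (mat g 2 1) = 0 := by
      have c := congrArg q1 e21
      simp only [map_add, q1_mul, q2_mul, q1_eI, q2_eI, star_zero, star_E,
        mul_zero, zero_mul, sub_zero, add_zero, zero_add, hq20] at c
      exact aux_eq_zero (z := E θ * E θ) (by linear_combination c) hneE
    have hq22 : q1 (mat g 2 2) = 0 := by
      have c := congrArg q1 e22
      simp only [map_add, q1_mul, q2_mul, q1_eI, q2_eI, star_zero, star_E,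
        mul_zero, zero_mul, sub_zero, add_zero, zero_add, hq21] at c
      exact aux_eq_zero (z := E θ * E θ) (by linear_combination c) hneE
    have hq10 : q1 (mat g 1 0) = 0 := by
      have c := congrArg q1 e10
      simp only [map_add, q1_mul, q2_mul, q1_eI, q2_eI, star_zero, star_E,
        mul_zero, zero_mul, sub_zero, add_zero, zero_add, hq20] at c
      exact aux_eq_zero (z := E θ * E θ) (by linear_combination c) hneE
    have hq11 : q1 (mat g 1 1) = 0 := by
      have c := congrArg q1 e11
      simp only [map_add, q1_mul, q2_mul, q1_eI, q2_eI, star_zero, star_E,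
        mul_zero, zero_mul, sub_zero, add_zero, zero_add, hq10, hq20, hq21] at c
      exact aux_eq_zero (z := E θ * E θ) (by linear_combination c) hneE
    have hq12 : q1 (mat g 1 2) = 0 := by
      have c := congrArg q1 e12
      simp only [map_add, q1_mul, q2_mul, q1_eI, q2_eI, star_zero, star_E,
        mul_zero, zero_mul, sub_zero, add_zero, zero_add, hq11, hq21, hq22] at c
      exact aux_eq_zero (z := E θ * E θ) (by linear_combination c) hneE
    have hq00 : q1 (mat g 0 0) = 0 := by
      have c := congrArg q1 e00
      simp only [map_add, q1_mul, q2_mul, q1_eI, q2_eI, star_zero, star_E,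
        mul_zero, zero_mul, sub_zero, add_zero, zero_add, hq10] at c
      exact aux_eq_zero (z := E θ * E θ) (by linear_combination c) hneE
    have hq01 : q1 (mat g 0 1) = 0 := by
      have c := congrArg q1 e01
      simp only [map_add, q1_mul, q2_mul, q1_eI, q2_eI, star_zero, star_E,
        mul_zero, zero_mul, sub_zero, add_zero, zero_add, hq00, hq10, hq11] at c
      exact aux_eq_zero (z := E θ * E θ) (by linear_combination c) hneE
    have hq02 : q1 (mat g 0 2) = 0 := by
      have c := congrArg q1 e02
      simp only [map_add, q1_mul, q2_mul, q1_eI, q2_eI, star_zero, star_E,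
        mul_zero, zero_mul, sub_zero, add_zero, zero_add, hq01, hq11, hq12] at c
      exact aux_eq_zero (z := E θ * E θ) (by linear_combination c) hneE
    refine q1zero_contra hgsq fun i j => ?_
    fin_cases i <;> fin_cases j <;> assumption
end
end
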